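/- arXiv:1003.3923 — 2 statements merged into one kernel-verified Lean document; each statement's English description precedes it below -/
import Mathlib

section
/- Define Φ : ℝ⁴ → ℝ⁴ by Φ(t,φ,θ,r) = (eᵗ·sin(2πr), φ, eᵗ·cos(2πr), θ), and let i : ℝ⁴ → ℝ⁴ be the linear map i(u₁,w₁,u₂,w₂) = (−w₁, u₁, −w₂, u₂) (multiplication by i on ℂ² under z_j = p_j + i q_j). Then for every (φ,θ,r) ∈ ℝ³, writing D := DΦ(0,φ,θ,r) for the Fréchet derivative at the point (0,φ,θ,r), one has: (a) i(D·(1,0,0,0)) = D·(0, sin(2πr), cos(2πr), 0), and (b) i(D·(0,0,0,1)) = D·(0, 2π·cos(2πr), −2π·sin(2πr), 0). -/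
/-!
`DΦ` sends `∂_φ, ∂_θ` onto the `q₁`- and `q₂`-axes and `∂_t, ∂_r` into the `(p₁, p₂)`-plane.
Since `i` maps the `p_j`-axis onto the `q_j`-axis, `i·DΦ(∂_t)` and `i·DΦ(∂_r)` are images of
combinations of `∂_φ, ∂_θ` whose coefficients are the `p`-coordinates of `DΦ(∂_t)`, `DΦ(∂_r)`.
-/

open Real

noncomputable section

/-- The map `Φ : ℝ⁴ → ℝ⁴`, `(t,φ,θ,r) ↦ (eᵗ sin(2πr), φ, eᵗ cos(2πr), θ)`,
where the target coordinates are `(p₁,q₁,p₂,q₂)`. -/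
def phiMap : ℝ × ℝ × ℝ × ℝ → ℝ × ℝ × ℝ × ℝ :=
  fun x => (Real.exp x.1 * Real.sin (2 * π * x.2.2.2), x.2.1,
            Real.exp x.1 * Real.cos (2 * π * x.2.2.2), x.2.2.1)

/-- Multiplication by `i` on `ℂ² ≅ ℝ⁴` in the coordinates `(p₁,q₁,p₂,q₂)`,
where `z_j = p_j + i q_j`:  `(u₁,w₁,u₂,w₂) ↦ (−w₁,u₁,−w₂,u₂)`. -/
def mulI : ℝ × ℝ × ℝ × ℝ → ℝ × ℝ × ℝ × ℝ :=
  fun v => (-v.2.1, v.1, -v.2.2.2, v.2.2.1)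

theorem fderiv_phiMap_apply (x v : ℝ × ℝ × ℝ × ℝ) :
    fderiv ℝ phiMap x v =
      (exp x.1 * (sin (2 * π * x.2.2.2) * v.1 + 2 * π * cos (2 * π * x.2.2.2) * v.2.2.2), v.2.1,
       exp x.1 * (cos (2 * π * x.2.2.2) * v.1 - 2 * π * sin (2 * π * x.2.2.2) * v.2.2.2),
       v.2.2.1) := by
  have ht := hasFDerivAt_fst (𝕜 := ℝ) (p := x)
  have hφ := (hasFDerivAt_snd (𝕜 := ℝ) (p := x)).fst
  have hθ := (hasFDerivAt_snd (𝕜 := ℝ) (p := x)).snd.fst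
  have hr := (hasFDerivAt_snd (𝕜 := ℝ) (p := x)).snd.snd.const_mul (2 * π)
  have hΦ : HasFDerivAt phiMap _ x :=
    (ht.exp.mul hr.sin).prodMk (hφ.prodMk ((ht.exp.mul hr.cos).prodMk hθ))
  rw [hΦ.fderiv]
  simp only [ContinuousLinearMap.prod_apply, add_apply, smul_apply, ContinuousLinearMap.comp_apply,
    ContinuousLinearMap.coe_fst', ContinuousLinearMap.coe_snd', smul_eq_mul, Prod.mk.injEq,
    and_true, true_and]
  constructor <;> ring

theorem mulI_fderiv_phiMap_dt (t φ θ r : ℝ) :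
    mulI (fderiv ℝ phiMap (t, φ, θ, r) (1, 0, 0, 0)) =
      fderiv ℝ phiMap (t, φ, θ, r) (0, exp t * sin (2 * π * r), exp t * cos (2 * π * r), 0) := by
  simp only [fderiv_phiMap_apply, mulI, Prod.mk.injEq]
  refine ⟨?_, ?_, ?_, ?_⟩ <;> ring

theorem mulI_fderiv_phiMap_dr (t φ θ r : ℝ) :
    mulI (fderiv ℝ phiMap (t, φ, θ, r) (0, 0, 0, 1)) =
      fderiv ℝ phiMap (t, φ, θ, r)
        (0, 2 * π * exp t * cos (2 * π * r), -(2 * π) * exp t * sin (2 * π * r), 0) := by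
  simp only [fderiv_phiMap_apply, mulI, Prod.mk.injEq]
  refine ⟨?_, ?_, ?_, ?_⟩ <;> ring

theorem pullback_i_compatible (φ θ r : ℝ) :
    mulI (fderiv ℝ phiMap (0, φ, θ, r) (1, 0, 0, 0))
      = fderiv ℝ phiMap (0, φ, θ, r) (0, Real.sin (2 * π * r), Real.cos (2 * π * r), 0) ∧
    mulI (fderiv ℝ phiMap (0, φ, θ, r) (0, 0, 0, 1))
      = fderiv ℝ phiMap (0, φ, θ, r)
          (0, 2 * π * Real.cos (2 * π * r), -(2 * π) * Real.sin (2 * π * r), 0) := by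
  have hdt := mulI_fderiv_phiMap_dt 0 φ θ r
  have hdr := mulI_fderiv_phiMap_dr 0 φ θ r
  rw [exp_zero] at hdt hdr
  simp only [one_mul, mul_one] at hdt hdr
  exact ⟨hdt, hdr⟩
end
end

section
/- Let Σ be a compact connected topological surface with nonempty boundary ∂Σ, and let φ : Σ → Σ be a homeomorphism equal to the identity on a neighborhood of ∂Σ. Let Σ_φ := (ℝ × Σ)/∼ be the mapping torus, where (t+1, z) ∼ (t, φ(z)), with the quotient topology. Let ι : Σ → Σ_φ be the fiber inclusion z ↦ [(0,z)], fix a connected component C of ∂Σ, and let L := { [(t,z)] : t ∈ ℝ, z ∈ C } ⊆ Σ_φ (a torus, since φ fixes C pointwise) with inclusion j : L → Σ_φ. Then the first singular homology group H₁(Σ_φ; ℤ) is generated by the union of the images ι_*(H₁(Σ; ℤ)) and j_*(H₁(L; ℤ)); equivalently, every class h ∈ H₁(Σ_φ; ℤ) can be written as h = ι_*(h_Σ) + j_*(h_L) with h_Σ ∈ H₁(Σ; ℤ) and h_L ∈ H₁(L; ℤ). -/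
/-!
STATEMENT 7 (First homology of a mapping torus of a surface): let `Σ` be a
compact connected topological surface with nonempty boundary (a charted space
over the Euclidean half-plane), `φ : Σ → Σ` a homeomorphism equal to the
identity near `∂Σ`, `Σ_φ` the mapping torus, `C` a connected component of
`∂Σ`, and `L ⊂ Σ_φ` the torus traced out by `C`.  Then every first homology
class of `Σ_φ` is the sum of a class coming from the fiber `Σ` and a class
coming from `L`.  Since all spaces involved are path-connected, `H₁` is
expressed as the abelianization of the fundamental group.
-/

open CategoryTheory

noncomputable section

/-- The mapping torus `(ℝ × S)/((t+1,z) ∼ (t,φ z))` of `φ : S → S`. -/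
abbrev MappingTorus (S : Type) [TopologicalSpace S] (φ : S → S) : Type :=
  Quot (fun a b : ℝ × S => a.1 = b.1 + 1 ∧ b.2 = φ a.2)

/-- The point `[(t,z)]` of the mapping torus. -/
def MappingTorus.mk (S : Type) [TopologicalSpace S] (φ : S → S) (t : ℝ) (z : S) :
    MappingTorus S φ := Quot.mk _ (t, z)

/-- The fiber inclusion `ι : S → S_φ`, `z ↦ [(0,z)]`. -/
def fiberIncl (S : Type) [TopologicalSpace S] (φ : S → S) : C(S, MappingTorus S φ) :=
  ⟨fun z => MappingTorus.mk S φ 0 z,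
    continuous_quot_mk.comp (continuous_const.prodMk continuous_id)⟩

/-- The subset `L = {[(t,z)] : t ∈ ℝ, z ∈ C}` of the mapping torus traced out
by a subset `C ⊆ S`. -/
def torusSet (S : Type) [TopologicalSpace S] (φ : S → S) (C : Set S) :
    Set (MappingTorus S φ) :=
  {q | ∃ (t : ℝ) (z : S), z ∈ C ∧ q = MappingTorus.mk S φ t z}

/-- The inclusion `j : L → S_φ`. -/
def torusIncl (S : Type) [TopologicalSpace S] (φ : S → S) (C : Set S) :
    C(torusSet S φ C, MappingTorus S φ) :=
  ⟨Subtype.val, continuous_subtype_val⟩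

open scoped FundamentalGroupoid in
/-- The homomorphism induced by a continuous map on fundamental groups. -/
def inducedπ₁ {X Y : Type} [TopologicalSpace X] [TopologicalSpace Y]
    (f : C(X, Y)) (x : X) :
    FundamentalGroup X x →* FundamentalGroup Y (f x) :=
  CategoryTheory.Functor.mapEnd (FundamentalGroupoid.mk x)
    (show FundamentalGroupoid X ⥤ FundamentalGroupoid Y from
      πₘ (show TopCat.of X ⟶ TopCat.of Y from TopCat.ofHom f))

/-!
The projection `ℝ × Σ → Σ_φ` is a covering map, with deck group `ℤ` acting by
`n +ᵥ (t, z) = (t - n, φⁿ z)`. Since `φ` fixes the basepoint `z₀ ∈ ∂Σ`, a loop at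
`[(0, z₀)]` lifts to a path `Γ` in `ℝ × Σ` from `(0, z₀)` to some `(t₁, z₀)`. Any path in a
product is homotopic to its second component (at the first coordinate `0`) followed by its
first component (at the second coordinate `z₀`); the former projects into the fiber and the
latter into the torus `L`.
-/

namespace Path.Homotopic.Quotient

variable {X Y Z : Type*} [TopologicalSpace X] [TopologicalSpace Y] [TopologicalSpace Z]

theorem map_eq_map_projRight_trans_map_projLeft (f : C(X × Y, Z)) {x₀ x₁ : X} {y₀ y₁ : Y}
    (γ : Path.Homotopic.Quotient (x₀, y₀) (x₁, y₁)) :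
    γ.map f = ((projRight γ).map (f.curry x₀)).trans
      ((projLeft γ).map (f.comp ((ContinuousMap.id X).prodMk (ContinuousMap.const X y₁)))) := by
  have split : γ = (prod (refl x₀) (projRight γ)).trans (prod (projLeft γ) (refl y₁)) := by
    rw [comp_prod_eq_prod_comp, refl_trans, trans_refl, prod_projLeft_projRight]
  induction γ with | mk P =>
  conv_lhs => rw [split]
  exact congrArg mk (Path.map_trans _ _ _)

end Path.Homotopic.Quotient

theorem Homeomorph.zpow_apply_eq_self_of_apply_eq_self {X : Type*} [TopologicalSpace X]
    {ψ : X ≃ₜ X} {x : X} (h : ψ x = x) (n : ℤ) : (ψ ^ n) x = x := by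
  induction n using Int.induction_on with
  | zero => rfl
  | succ n ih => rw [zpow_add_one, Homeomorph.mul_apply, h, ih]
  | pred n ih => rw [zpow_sub_one, Homeomorph.mul_apply, Homeomorph.inv_apply,
      ψ.symm_apply_eq.mpr h.symm, ih]

namespace MappingTorus

variable {S : Type} [TopologicalSpace S] (φ : S ≃ₜ S)

def proj : C(ℝ × S, MappingTorus S φ) := ⟨fun e => mk S φ e.1 e.2, continuous_quot_mk⟩

abbrev deckAction : AddAction ℤ (ℝ × S) where
  vadd n e := (e.1 - n, (φ ^ n) e.2)
  zero_vadd e := by change (e.1 - ((0 : ℤ) : ℝ), (φ ^ (0 : ℤ)) e.2) = e; simp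
  add_vadd m n e := by
    refine Prod.ext ?_ ?_
    · change _ - _ = _ - _ - _; push_cast; ring
    · change (φ ^ (m + n)) e.2 = (φ ^ m) ((φ ^ n) e.2); rw [zpow_add, Homeomorph.mul_apply]

theorem mk_sub_intCast (t : ℝ) (z : S) (n : ℤ) : mk S φ (t - n) ((φ ^ n) z) = mk S φ t z := by
  let := deckAction φ
  have proj_one_vadd (e : ℝ × S) : proj φ ((1 : ℤ) +ᵥ e) = proj φ e := by
    change mk S φ (e.1 - (1 : ℤ)) ((φ ^ (1 : ℤ)) e.2) = mk S φ e.1 e.2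
    rw [zpow_one]
    exact (Quot.sound (a := e) ⟨by push_cast; ring, rfl⟩).symm
  change proj φ (n +ᵥ (t, z)) = proj φ (t, z)
  induction n using Int.induction_on with
  | zero => rw [zero_vadd]
  | succ n ih => rw [add_comm, add_vadd, proj_one_vadd, ih]
  | pred n ih => rw [← ih, ← proj_one_vadd, ← add_vadd]; congr 2; ring

theorem mk_eq_mk_iff {t t' : ℝ} {z z' : S} :
    mk S φ t z = mk S φ t' z' ↔ ∃ n : ℤ, t = t' - n ∧ z = (φ ^ n) z' := by
  let := deckAction φ
  refine ⟨fun h => ?_, ?_⟩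
  · have generator : ∀ a b : ℝ × S, a.1 = b.1 + 1 ∧ b.2 = φ a.2 → AddAction.orbitRel ℤ _ a b := by
      rintro a b ⟨h₁, h₂⟩
      refine ⟨-1, Prod.ext ?_ ?_⟩
      · change b.1 - ((-1 : ℤ) : ℝ) = a.1; push_cast; linarith
      · change (φ ^ (-1 : ℤ)) b.2 = a.2; rw [h₂, zpow_neg_one]; exact φ.symm_apply_apply a.2
    obtain ⟨n, hn⟩ := (AddAction.orbitRel ℤ _).iseqv.eqvGen_iff.mp
      (Relation.EqvGen.mono generator _ _ (Quot.eqvGen_exact h))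
    exact ⟨n, (congrArg Prod.fst hn).symm, (congrArg Prod.snd hn).symm⟩
  · rintro ⟨n, rfl, rfl⟩
    exact mk_sub_intCast φ t' z' n

theorem isCoveringMap_proj : IsCoveringMap (proj φ) := by
  let := deckAction φ
  have hcov : IsAddQuotientCoveringMap (proj φ) ℤ :=
    { toIsQuotientMap := isQuotientMap_quot_mk
      continuous_const_vadd n :=
        (continuous_fst.sub continuous_const).prodMk ((φ ^ n).continuous.comp continuous_snd)
      apply_eq_iff_mem_orbit {e₁ e₂} := by
        refine (mk_eq_mk_iff φ).trans ⟨fun ⟨n, h₁, h₂⟩ => ⟨n, Prod.ext h₁.symm h₂.symm⟩, ?_⟩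
        rintro ⟨n, rfl⟩
        exact ⟨n, rfl, rfl⟩
      disjoint e := by
        refine ⟨Set.Ioo (e.1 - 2⁻¹) (e.1 + 2⁻¹) ×ˢ Set.univ,
          prod_mem_nhds (Ioo_mem_nhds (by linarith) (by linarith)) Filter.univ_mem, ?_⟩
        rintro n ⟨_, ⟨u, ⟨hu, -⟩, rfl⟩, ⟨hnu, -⟩⟩
        change u.1 - n ∈ _ at hnu
        simp only [Set.mem_Ioo] at hu hnu
        have h₁ : (n : ℝ) < 1 := by linarith
        have h₂ : (-1 : ℝ) < n := by linarith
        have : n < 1 := by exact_mod_cast h₁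
        have : -1 < n := by exact_mod_cast h₂
        omega }
  exact hcov.isCoveringMap

open Path.Homotopic in
theorem exists_eq_torusIncl_mul_fiberIncl {C : Set S} {z₀ : S} (hz₀ : z₀ ∈ C)
    (hφ : φ z₀ = z₀) (g : FundamentalGroup (MappingTorus S φ) (mk S φ 0 z₀)) :
    ∃ (a : FundamentalGroup S z₀)
      (b : FundamentalGroup (torusSet S φ C) ⟨mk S φ 0 z₀, ⟨0, z₀, hz₀, rfl⟩⟩),
      g = (show FundamentalGroup (MappingTorus S φ) (mk S φ 0 z₀) from
          inducedπ₁ (torusIncl S φ C) ⟨mk S φ 0 z₀, ⟨0, z₀, hz₀, rfl⟩⟩ b) *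
        (show FundamentalGroup (MappingTorus S φ) (mk S φ 0 z₀) from
          inducedπ₁ (fiberIncl S φ) z₀ a) := by
  obtain ⟨γ, rfl⟩ := Path.Homotopic.Quotient.mk_surjective (FundamentalGroup.toPath g)
  obtain ⟨Γ, hΓ, hΓ₀⟩ :=
    (isCoveringMap_proj φ).exists_path_lifts γ.toContinuousMap (0, z₀) γ.source
  have hΓ₁ : proj φ (Γ 1) = mk S φ 0 z₀ := (congrFun hΓ 1).trans γ.target
  obtain ⟨_, -, hz⟩ := (mk_eq_mk_iff φ).mp hΓ₁
  rw [Homeomorph.zpow_apply_eq_self_of_apply_eq_self hφ] at hz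
  set t₁ := (Γ 1).1
  have ht₁ : mk S φ t₁ z₀ = mk S φ 0 z₀ := hz ▸ hΓ₁
  let P : Path ((0 : ℝ), z₀) (t₁, z₀) := ⟨Γ, hΓ₀, Prod.ext rfl hz⟩
  let toTorus : C(ℝ, torusSet S φ C) := ⟨fun t => ⟨mk S φ t z₀, t, z₀, hz₀, rfl⟩,
    ((proj φ).continuous.comp (Continuous.prodMk_left z₀)).subtype_mk _⟩
  refine ⟨projRight (Path.Homotopic.Quotient.mk P),
    ((projLeft (Path.Homotopic.Quotient.mk P)).map toTorus).cast rfl (Subtype.ext ht₁.symm), ?_⟩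
  have hγ : Path.Homotopic.Quotient.mk γ =
      ((Path.Homotopic.Quotient.mk P).map (proj φ)).cast rfl ht₁.symm :=
    congrArg _ (Path.ext hΓ.symm)
  rw [hγ, Path.Homotopic.Quotient.map_eq_map_projRight_trans_map_projLeft]
  -- both sides are the class of one concatenated path, up to casting its endpoint
  rfl

end MappingTorus

open scoped Manifold in
theorem mappingTorus_H1_generated_by_fiber_and_boundary_torus_general
    (S : Type) [TopologicalSpace S] [ChartedSpace (EuclideanHalfSpace 2) S]
    (φ : S ≃ₜ S)
    -- `φ` is the identity on a neighborhood of `∂Σ`: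
    (V : Set S) (hVbd : (𝓡∂ 2).boundary S ⊆ V)
    (hφV : ∀ z ∈ V, φ z = z)
    -- `C` is a connected component of the (nonempty) boundary `∂Σ`:
    (C : Set S)
    (hC : ∃ z ∈ (𝓡∂ 2).boundary S,
      C = connectedComponentIn ((𝓡∂ 2).boundary S) z)
    -- a basepoint on `C`:
    (z₀ : S) (hz₀ : z₀ ∈ C)
    (h : Abelianization
      (FundamentalGroup (MappingTorus S ⇑φ) (MappingTorus.mk S ⇑φ 0 z₀))) :
    ∃ (a : FundamentalGroup S z₀)
      (b : FundamentalGroup (torusSet S ⇑φ C)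
        ⟨MappingTorus.mk S ⇑φ 0 z₀, ⟨0, z₀, hz₀, rfl⟩⟩),
      h = (show Abelianization
              (FundamentalGroup (MappingTorus S ⇑φ) (MappingTorus.mk S ⇑φ 0 z₀))
            from Abelianization.of (inducedπ₁ (fiberIncl S ⇑φ) z₀ a))
        * (show Abelianization
              (FundamentalGroup (MappingTorus S ⇑φ) (MappingTorus.mk S ⇑φ 0 z₀))
            from Abelianization.of (inducedπ₁ (torusIncl S ⇑φ C)
              ⟨MappingTorus.mk S ⇑φ 0 z₀, ⟨0, z₀, hz₀, rfl⟩⟩ b)) := by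
  obtain ⟨z, -, rfl⟩ := hC
  have hφz₀ : φ z₀ = z₀ := hφV z₀ (hVbd (connectedComponentIn_subset _ _ hz₀))
  obtain ⟨g, rfl⟩ := QuotientGroup.mk_surjective h
  obtain ⟨a, b, rfl⟩ := MappingTorus.exists_eq_torusIncl_mul_fiberIncl φ hz₀ hφz₀ g
  exact ⟨a, b, (map_mul Abelianization.of _ _).trans (mul_comm _ _)⟩

open scoped Manifold in
/-- `H₁` of the mapping torus of a compact connected surface with boundary is
generated by the images of `H₁` of the fiber and of `H₁` of a boundary
torus. -/
theorem mappingTorus_H1_generated_by_fiber_and_boundary_torus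
    (S : Type) [TopologicalSpace S] [ChartedSpace (EuclideanHalfSpace 2) S]
    [CompactSpace S] [ConnectedSpace S] [T2Space S]
    (φ : S ≃ₜ S)
    -- `φ` is the identity on a neighborhood of `∂Σ`:
    (V : Set S) (hVopen : IsOpen V) (hVbd : (𝓡∂ 2).boundary S ⊆ V)
    (hφV : ∀ z ∈ V, φ z = z)
    -- `C` is a connected component of the (nonempty) boundary `∂Σ`:
    (C : Set S)
    (hC : ∃ z ∈ (𝓡∂ 2).boundary S,
      C = connectedComponentIn ((𝓡∂ 2).boundary S) z)
    -- a basepoint on `C`: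
    (z₀ : S) (hz₀ : z₀ ∈ C)
    (h : Abelianization
      (FundamentalGroup (MappingTorus S ⇑φ) (MappingTorus.mk S ⇑φ 0 z₀))) :
    ∃ (a : FundamentalGroup S z₀)
      (b : FundamentalGroup (torusSet S ⇑φ C)
        ⟨MappingTorus.mk S ⇑φ 0 z₀, ⟨0, z₀, hz₀, rfl⟩⟩),
      h = (show Abelianization
              (FundamentalGroup (MappingTorus S ⇑φ) (MappingTorus.mk S ⇑φ 0 z₀))
            from Abelianization.of (inducedπ₁ (fiberIncl S ⇑φ) z₀ a))
        * (show Abelianization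
              (FundamentalGroup (MappingTorus S ⇑φ) (MappingTorus.mk S ⇑φ 0 z₀))
            from Abelianization.of (inducedπ₁ (torusIncl S ⇑φ C)
              ⟨MappingTorus.mk S ⇑φ 0 z₀, ⟨0, z₀, hz₀, rfl⟩⟩ b)) :=
  mappingTorus_H1_generated_by_fiber_and_boundary_torus_general S φ V hVbd hφV C hC z₀ hz₀ h
end
end
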